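/- arXiv:1810.08907 — 2 statements merged into one kernel-verified Lean document; each statement's English description precedes it below -/
import Mathlib

section
/- Let f : ℝⁿ → ℝ be convex with L-Lipschitz gradient and minimizer x⋆, 0 < s ≤ 1/(3L). Let (x_k, v_k) satisfy the NAG-C phase-space recursion x_{k+1} = x_k + √s·v_k, v_{k+1} = v_k - (3/(k+1))v_{k+1} - √s(∇f(x_{k+1}) - ∇f(x_k)) - (1+3/(k+1))√s∇f(x_{k+1}), with v₀ = -√s∇f(x₀). Define E(k) = s(k+3)(k+1)(f(x_k) - f(x⋆)) + (1/2)‖(k+1)√s·v_k + 2(x_{k+1} - x⋆) + (k+1)s∇f(x_k)‖². Then for all k ≥ 0, E(k+1) - E(k) ≤ -(s²/2)[(k+3)(k-1) - Ls(k+3)(k+1)]·‖∇f(x_{k+1})‖². -/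
/-!
Write `w k = (k+1)√s v k + 2 (x (k+1) - x⋆) + (k+1) s ∇f (x k)` for the vector inside the norm.
The two recursions give `w (k+1) = w k - (k+3) s ∇f (x (k+1))`, so the squared norm changes by
`-2 (k+3) s ⟪w k, ∇f (x (k+1))⟫ + (k+3)² s² ‖∇f (x (k+1))‖²`. That inner product is controlled by
co-coercivity, `f p - f q ≤ ⟪∇f p, p - q⟫ - ‖∇f p - ∇f q‖² / (2L)`, at `(x (k+1), x k)` and
`(x (k+1), x⋆)`, together with Young's inequality for
`⟪∇f (x (k+1)) - ∇f (x k), s ∇f (x (k+1))⟫`, whose `‖∇f (x (k+1)) - ∇f (x k)‖²` term cancels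
the one from co-coercivity.
Co-coercivity combines the supporting-hyperplane inequality at `p` with the descent lemma at `q`,
both evaluated at the gradient step `q - (∇f q - ∇f p) / L`.
-/

open Set
open scoped RealInnerProductSpace

section

variable {E : Type*} [NormedAddCommGroup E] [InnerProductSpace ℝ E]

theorem real_inner_le_norm_sq_div_add {L : ℝ} (hL : 0 < L) (u v : E) :
    ⟪u, v⟫ ≤ ‖u‖ ^ 2 / (2 * L) + L / 2 * ‖v‖ ^ 2 := by
  calc ⟪u, v⟫ ≤ ‖u‖ * ‖v‖ := real_inner_le_norm u v
    _ = ‖u‖ ^ 2 / (2 * L) + L / 2 * ‖v‖ ^ 2 - (‖u‖ - L * ‖v‖) ^ 2 / (2 * L) := by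
      field_simp; ring
    _ ≤ ‖u‖ ^ 2 / (2 * L) + L / 2 * ‖v‖ ^ 2 := sub_le_self _ (by positivity)

variable [CompleteSpace E] {f : E → ℝ} {g : E → E}

theorem HasGradientAt.hasDerivAt_comp_add_smul {g' p d : E} {t : ℝ}
    (h : HasGradientAt f g' (p + t • d)) :
    HasDerivAt (fun t : ℝ ↦ f (p + t • d)) ⟪g', d⟫ t := by
  have hline : HasDerivAt (fun t : ℝ ↦ p + t • d) d t := by
    simpa using ((hasDerivAt_id t).smul_const d).const_add p
  have := (hasGradientAt_iff_hasFDerivAt.mp h).comp_hasDerivAt t hline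
  simp only [InnerProductSpace.toDual_apply_apply] at this
  exact this

theorem ConvexOn.add_inner_le_of_hasGradientAt (hf : ConvexOn ℝ univ f) {g' p : E}
    (h : HasGradientAt f g' p) (q : E) : f p + ⟪g', q - p⟫ ≤ f q := by
  have hline : ConvexOn ℝ univ (fun t : ℝ ↦ f (p + t • (q - p))) := by
    simpa [Function.comp_def, AffineMap.lineMap_apply_module', add_comm] using
      hf.comp_affineMap (AffineMap.lineMap p q)
  have hderiv : HasDerivAt (fun t : ℝ ↦ f (p + t • (q - p))) ⟪g', q - p⟫ 0 :=
    HasGradientAt.hasDerivAt_comp_add_smul (by simpa using h)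
  simpa [slope_def_field, le_sub_iff_add_le'] using
    hline.le_slope_of_hasDerivAt (mem_univ 0) (mem_univ 1) one_pos hderiv

theorem le_add_inner_add_sq_of_lipschitz_gradient {L : ℝ}
    (hgrad : ∀ x, HasGradientAt f (g x) x) (hlip : ∀ a b, ‖g a - g b‖ ≤ L * ‖a - b‖)
    (p q : E) : f q ≤ f p + ⟪g p, q - p⟫ + L / 2 * ‖q - p‖ ^ 2 := by
  set d := q - p
  let ψ : ℝ → ℝ := fun t ↦ f (p + t • d) - t * ⟪g p, d⟫ - L / 2 * ‖d‖ ^ 2 * t ^ 2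
  have hψ : ∀ t, HasDerivAt ψ (⟪g (p + t • d) - g p, d⟫ - L * t * ‖d‖ ^ 2) t := fun t ↦ by
    refine ((((hgrad _).hasDerivAt_comp_add_smul).sub ((hasDerivAt_id t).mul_const _)).sub
      ((hasDerivAt_pow 2 t).const_mul (L / 2 * ‖d‖ ^ 2))).congr_deriv ?_
    rw [inner_sub_left]; ring
  have hanti : AntitoneOn ψ (Ici 0) := by
    refine antitoneOn_of_hasDerivWithinAt_nonpos (convex_Ici 0)
      (fun t _ ↦ (hψ t).continuousAt.continuousWithinAt) (fun t _ ↦ (hψ t).hasDerivWithinAt)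
      fun t ht ↦ ?_
    rw [interior_Ici, mem_Ioi] at ht
    have hstep : ‖g (p + t • d) - g p‖ ≤ L * (t * ‖d‖) := by
      simpa [norm_smul, abs_of_pos ht] using hlip (p + t • d) p
    calc ⟪g (p + t • d) - g p, d⟫ - L * t * ‖d‖ ^ 2
        ≤ ‖g (p + t • d) - g p‖ * ‖d‖ - L * t * ‖d‖ ^ 2 :=
          sub_le_sub_right (real_inner_le_norm _ _) _
      _ ≤ L * (t * ‖d‖) * ‖d‖ - L * t * ‖d‖ ^ 2 := by gcongr
      _ = 0 := by ring
  have hψ₀ : ψ 0 = f p := by simp [ψ]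
  have hψ₁ : ψ 1 = f q - ⟪g p, q - p⟫ - L / 2 * ‖q - p‖ ^ 2 := by simp [ψ, d]
  linarith [hanti (mem_Ici.2 le_rfl) (mem_Ici.2 zero_le_one) zero_le_one]

theorem ConvexOn.sub_le_inner_sub_of_lipschitz_gradient (hf : ConvexOn ℝ univ f) {L : ℝ}
    (hL : 0 < L) (hgrad : ∀ x, HasGradientAt f (g x) x)
    (hlip : ∀ a b, ‖g a - g b‖ ≤ L * ‖a - b‖) (p q : E) :
    f p - f q ≤ ⟪g p, p - q⟫ - ‖g p - g q‖ ^ 2 / (2 * L) := by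
  set u := g q - g p
  have hconvex := hf.add_inner_le_of_hasGradientAt (hgrad p) (q - L⁻¹ • u)
  have hdescent := le_add_inner_add_sq_of_lipschitz_gradient hgrad hlip q (q - L⁻¹ • u)
  have hzp : q - L⁻¹ • u - p = (q - p) - L⁻¹ • u := by abel
  have hzq : q - L⁻¹ • u - q = -(L⁻¹ • u) := by abel
  have hnorm : L / 2 * ‖-(L⁻¹ • u)‖ ^ 2 = ‖u‖ ^ 2 / (2 * L) := by
    rw [norm_neg, norm_smul, Real.norm_eq_abs, abs_inv, abs_of_pos hL]
    field_simp
  have hu : ⟪g q, u⟫ - ⟪g p, u⟫ = ‖u‖ ^ 2 := by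
    rw [← inner_sub_left, real_inner_self_eq_norm_sq]
  rw [hzp, inner_sub_right, real_inner_smul_right] at hconvex
  rw [hzq, hnorm, inner_neg_right, real_inner_smul_right] at hdescent
  rw [norm_sub_rev, ← neg_sub q p, inner_neg_right]
  linear_combination hconvex + hdescent - L⁻¹ * hu

theorem nagc_velocity_step {V : Type*} [AddCommGroup V] [Module ℝ V] {k a : ℝ}
    {v v' g₀ g₁ : V} (hk : k + 1 ≠ 0)
    (h : v' = v - (3 / (k + 1)) • v' - a • (g₁ - g₀) - ((1 + 3 / (k + 1)) * a) • g₁) :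
    (k + 4) • v' = (k + 1) • v - ((k + 1) * a) • (g₁ - g₀) - ((k + 4) * a) • g₁ := by
  have h3 : (k + 1) * (3 / (k + 1)) = 3 := by field_simp
  linear_combination (norm := module) (k + 1) • h + -h3 • (v' + a • g₁)

theorem nagc_lyapunov_vector_succ {V : Type*} [AddCommGroup V] [Module ℝ V] {k a s : ℝ}
    {v v' x₁ x₂ xstar g₀ g₁ : V} (hk : k + 1 ≠ 0) (ha : a * a = s)
    (hv : v' = v - (3 / (k + 1)) • v' - a • (g₁ - g₀) - ((1 + 3 / (k + 1)) * a) • g₁)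
    (hx : x₂ = x₁ + a • v') :
    ((k + 1 + 1) * a) • v' + (2 : ℝ) • (x₂ - xstar) + ((k + 1 + 1) * s) • g₁
      = ((k + 1) * a) • v + (2 : ℝ) • (x₁ - xstar) + ((k + 1) * s) • g₀
        - ((k + 3) * s) • g₁ := by
  subst ha hx
  linear_combination (norm := module) a • nagc_velocity_step hk hv

theorem nagc_energy_step_le (hf : ConvexOn ℝ univ f) {L : ℝ} (hL : 0 < L)
    (hgrad : ∀ x, HasGradientAt f (g x) x) (hlip : ∀ a b, ‖g a - g b‖ ≤ L * ‖a - b‖)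
    {k a s : ℝ} (hk : 0 ≤ k + 1) (hs : 0 ≤ s) {x₀ x₁ xstar v w : E}
    (hmin : f xstar ≤ f x₁) (hx : x₁ = x₀ + a • v)
    (hw : w = ((k + 1) * a) • v + (2 : ℝ) • (x₁ - xstar) + ((k + 1) * s) • g x₀) :
    s * (k + 1 + 3) * (k + 1 + 1) * (f x₁ - f xstar) + 1 / 2 * ‖w - ((k + 3) * s) • g x₁‖ ^ 2
      - (s * (k + 3) * (k + 1) * (f x₀ - f xstar) + 1 / 2 * ‖w‖ ^ 2)
      ≤ -(s ^ 2 / 2) * ((k + 3) * (k - 1) - L * s * (k + 3) * (k + 1)) * ‖g x₁‖ ^ 2 := by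
  have hcoco := hf.sub_le_inner_sub_of_lipschitz_gradient hL hgrad hlip x₁ x₀
  have hopt : f x₁ - f xstar ≤ ⟪x₁ - xstar, g x₁⟫ := by
    rw [real_inner_comm]
    exact (hf.sub_le_inner_sub_of_lipschitz_gradient hL hgrad hlip x₁ xstar).trans
      (sub_le_self _ (by positivity))
  have hyoung := real_inner_le_norm_sq_div_add hL (g x₁ - g x₀) (s • g x₁)
  rw [show x₁ - x₀ = a • v by rw [hx]; abel, real_inner_smul_right, real_inner_comm] at hcoco
  rw [real_inner_smul_right, inner_sub_left, real_inner_self_eq_norm_sq, norm_smul,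
    Real.norm_eq_abs, mul_pow, sq_abs] at hyoung
  rw [norm_sub_sq_real, hw]
  simp only [inner_add_left, real_inner_smul_left, real_inner_smul_right, norm_smul,
    Real.norm_eq_abs, mul_pow, sq_abs]
  have hc : 0 ≤ (k + 3) * (k + 1) * s := mul_nonneg (mul_nonneg (by linarith) hk) hs
  have h2c : 0 ≤ 2 * (k + 3) * s := mul_nonneg (by linarith) hs
  linear_combination mul_le_mul_of_nonneg_left hcoco hc + mul_le_mul_of_nonneg_left hopt h2c
    + mul_le_mul_of_nonneg_left hmin hs + mul_le_mul_of_nonneg_left hyoung hc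

end

theorem nag_c_lyapunov_decrease_general {n : ℕ}
    (f : EuclideanSpace ℝ (Fin n) → ℝ)
    (g : EuclideanSpace ℝ (Fin n) → EuclideanSpace ℝ (Fin n))
    (L s : ℝ) (hL : 0 < L)
    (hgrad : ∀ x, HasGradientAt f (g x) x)
    (hconv : ConvexOn ℝ Set.univ f)
    (hlip : ∀ a b, ‖g a - g b‖ ≤ L * ‖a - b‖)
    (xstar : EuclideanSpace ℝ (Fin n)) (hmin : ∀ z, f xstar ≤ f z)
    (hs : 0 < s)
    (x v : ℕ → EuclideanSpace ℝ (Fin n))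
    (hx : ∀ k : ℕ, x (k + 1) = x k + Real.sqrt s • v k)
    (hv : ∀ k : ℕ, v (k + 1) = v k - (3 / ((k : ℝ) + 1)) • v (k + 1)
          - Real.sqrt s • (g (x (k + 1)) - g (x k))
          - ((1 + 3 / ((k : ℝ) + 1)) * Real.sqrt s) • g (x (k + 1))) :
    ∀ k : ℕ,
      (s * ((k : ℝ) + 1 + 3) * ((k : ℝ) + 1 + 1) * (f (x (k + 1)) - f xstar)
        + (1/2) * ‖(((k : ℝ) + 1 + 1) * Real.sqrt s) • v (k + 1)
            + (2 : ℝ) • (x (k + 2) - xstar) + (((k : ℝ) + 1 + 1) * s) • g (x (k + 1))‖ ^ 2)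
      - (s * ((k : ℝ) + 3) * ((k : ℝ) + 1) * (f (x k) - f xstar)
        + (1/2) * ‖(((k : ℝ) + 1) * Real.sqrt s) • v k
            + (2 : ℝ) • (x (k + 1) - xstar) + (((k : ℝ) + 1) * s) • g (x k)‖ ^ 2)
      ≤ -(s ^ 2 / 2) * (((k : ℝ) + 3) * ((k : ℝ) - 1) - L * s * ((k : ℝ) + 3) * ((k : ℝ) + 1))
          * ‖g (x (k + 1))‖ ^ 2 := by
  intro k
  rw [nagc_lyapunov_vector_succ (by positivity) (Real.mul_self_sqrt hs.le) (hv k) (hx (k + 1))]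
  exact nagc_energy_step_le hconv hL hgrad hlip (by positivity) hs.le (hmin _) (hx k) rfl

/-- Discrete Lyapunov decrease lemma for NAG-C. -/
theorem nag_c_lyapunov_decrease {n : ℕ}
    (f : EuclideanSpace ℝ (Fin n) → ℝ)
    (g : EuclideanSpace ℝ (Fin n) → EuclideanSpace ℝ (Fin n))
    (L s : ℝ) (hL : 0 < L)
    (hgrad : ∀ x, HasGradientAt f (g x) x)
    (hconv : ConvexOn ℝ Set.univ f)
    (hlip : ∀ a b, ‖g a - g b‖ ≤ L * ‖a - b‖)
    (xstar : EuclideanSpace ℝ (Fin n)) (hmin : ∀ z, f xstar ≤ f z)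
    (hs : 0 < s) (hsL : s ≤ 1 / (3 * L))
    (x v : ℕ → EuclideanSpace ℝ (Fin n))
    (hv0 : v 0 = -(Real.sqrt s) • g (x 0))
    (hx : ∀ k : ℕ, x (k + 1) = x k + Real.sqrt s • v k)
    (hv : ∀ k : ℕ, v (k + 1) = v k - (3 / ((k : ℝ) + 1)) • v (k + 1)
          - Real.sqrt s • (g (x (k + 1)) - g (x k))
          - ((1 + 3 / ((k : ℝ) + 1)) * Real.sqrt s) • g (x (k + 1))) :
    ∀ k : ℕ,
      (s * ((k : ℝ) + 1 + 3) * ((k : ℝ) + 1 + 1) * (f (x (k + 1)) - f xstar)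
        + (1/2) * ‖(((k : ℝ) + 1 + 1) * Real.sqrt s) • v (k + 1)
            + (2 : ℝ) • (x (k + 2) - xstar) + (((k : ℝ) + 1 + 1) * s) • g (x (k + 1))‖ ^ 2)
      - (s * ((k : ℝ) + 3) * ((k : ℝ) + 1) * (f (x k) - f xstar)
        + (1/2) * ‖(((k : ℝ) + 1) * Real.sqrt s) • v k
            + (2 : ℝ) • (x (k + 1) - xstar) + (((k : ℝ) + 1) * s) • g (x k)‖ ^ 2)
      ≤ -(s ^ 2 / 2) * (((k : ℝ) + 3) * ((k : ℝ) - 1) - L * s * ((k : ℝ) + 3) * ((k : ℝ) + 1))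
          * ‖g (x (k + 1))‖ ^ 2 :=
  nag_c_lyapunov_decrease_general f g L s hL hgrad hconv hlip xstar hmin hs x v hx hv
end

section
/- Let f : ℝⁿ → ℝ be twice continuously differentiable, convex with L-Lipschitz gradient, with minimizer x⋆, s > 0, t₀ = (3/2)√s. Suppose X : [t₀, ∞) → ℝⁿ is a C² solution of Ẍ + (3/t)Ẋ + √s∇²f(X)Ẋ + (1 + 3√s/(2t))∇f(X) = 0. Define E(t) = t(t + √s/2)(f(X(t)) - f(x⋆)) + (1/2)‖tẊ(t) + 2(X(t) - x⋆) + t√s∇f(X(t))‖². Then for all t ≥ t₀, dE/dt ≤ -[√s·t² + (1/L + s/2)t + √s/(2L)]·‖∇f(X(t))‖². -/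
/-!
Along the trajectory the ODE is exactly what makes the vector `t Ẋ + 2 (X - x⋆) + t √s ∇f(X)`
have derivative `-(t + √s/2) ∇f(X)`, so that
`E' = (2t + √s/2) (f(X) - f(x⋆)) - (t + √s/2) (2 ⟪∇f(X), X - x⋆⟫ + t √s ‖∇f(X)‖²)`.
For convex `L`-smooth `f` one has `f(X) - f(x⋆) + ‖∇f(X)‖² / (2L) ≤ ⟪∇f(X), X - x⋆⟫`, which
bounds `E'` by the stated multiple of `-‖∇f(X)‖²` plus `-(√s/2) (f(X) - f(x⋆)) ≤ 0`.
-/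

open Set InnerProductSpace
open scoped RealInnerProductSpace

section Gradient

variable {E : Type*} [NormedAddCommGroup E] [InnerProductSpace ℝ E] [CompleteSpace E]
  {f : E → ℝ} {g : E → E}

theorem HasGradientAt.comp_hasDerivAt {f' : E} {c : ℝ → E} {c' : E} {t : ℝ}
    (hf : HasGradientAt f f' (c t)) (hc : HasDerivAt c c' t) :
    HasDerivAt (f ∘ c) ⟪f', c'⟫ t := by
  have := hf.hasFDerivAt.comp_hasDerivAt t hc
  rwa [toDual_apply_apply] at this

theorem ConvexOn.add_inner_gradient_le (hconv : ConvexOn ℝ univ f)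
    (hgrad : ∀ x, HasGradientAt f (g x) x) (x y : E) :
    f x + ⟪g x, y - x⟫ ≤ f y := by
  let c : ℝ →ᵃ[ℝ] E := AffineMap.lineMap x y
  have hφ : HasDerivAt (f ∘ c) ⟪g x, y - x⟫ 0 := by
    simpa [c] using (hgrad (c 0)).comp_hasDerivAt AffineMap.hasDerivAt_lineMap
  have := (hconv.comp_affineMap c).le_slope_of_hasDerivAt (mem_univ 0) (mem_univ 1) one_pos hφ
  simp [slope_def_field, c] at this
  linarith

theorem le_add_inner_gradient_add_sq (hgrad : ∀ x, HasGradientAt f (g x) x) {L : ℝ}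
    (hlip : ∀ a b, ‖g a - g b‖ ≤ L * ‖a - b‖) (x y : E) :
    f y ≤ f x + ⟪g x, y - x⟫ + L / 2 * ‖y - x‖ ^ 2 := by
  let c : ℝ →ᵃ[ℝ] E := AffineMap.lineMap x y
  let φ : ℝ → ℝ := fun τ => f (c τ) - τ * ⟪g x, y - x⟫ - L / 2 * τ ^ 2 * ‖y - x‖ ^ 2
  have hφ : ∀ τ, HasDerivAt φ (⟪g (c τ) - g x, y - x⟫ - L * τ * ‖y - x‖ ^ 2) τ := by
    intro τ
    have := (((hgrad _).comp_hasDerivAt (AffineMap.hasDerivAt_lineMap (a := x) (b := y))).sub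
      ((hasDerivAt_id τ).mul_const ⟪g x, y - x⟫)).sub
      (((hasDerivAt_pow 2 τ).const_mul (L / 2)).mul_const (‖y - x‖ ^ 2))
    refine this.congr_deriv ?_
    simp only [c, inner_sub_left]
    ring
  have hφ' : ∀ τ ∈ interior (Ici (0 : ℝ)), ⟪g (c τ) - g x, y - x⟫ - L * τ * ‖y - x‖ ^ 2 ≤ 0 := by
    intro τ hτ
    rw [interior_Ici] at hτ
    have hdist : ‖c τ - x‖ = τ * ‖y - x‖ := by
      rw [AffineMap.lineMap_apply, vadd_eq_add, add_sub_cancel_right, norm_smul,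
        Real.norm_of_nonneg hτ.le, vsub_eq_sub]
    refine sub_nonpos.2 ?_
    calc ⟪g (c τ) - g x, y - x⟫
        ≤ ‖g (c τ) - g x‖ * ‖y - x‖ := real_inner_le_norm _ _
      _ ≤ L * ‖c τ - x‖ * ‖y - x‖ := by gcongr; exact hlip _ _
      _ = L * τ * ‖y - x‖ ^ 2 := by rw [hdist]; ring
  have hanti := antitoneOn_of_hasDerivWithinAt_nonpos (convex_Ici 0)
    (fun τ _ => (hφ τ).continuousAt.continuousWithinAt) (fun τ _ => (hφ τ).hasDerivWithinAt) hφ'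
  have := hanti self_mem_Ici (mem_Ici.2 zero_le_one) zero_le_one
  simp [φ, c] at this
  linarith

theorem ConvexOn.add_inner_gradient_add_sq_le (hconv : ConvexOn ℝ univ f)
    (hgrad : ∀ x, HasGradientAt f (g x) x) {L : ℝ} (hL : 0 < L)
    (hlip : ∀ a b, ‖g a - g b‖ ≤ L * ‖a - b‖) (x y : E) :
    f x + ⟪g x, y - x⟫ + 1 / (2 * L) * ‖g y - g x‖ ^ 2 ≤ f y := by
  set d := g y - g x
  -- compare both bounds at the gradient step `y - (1 / L) • d`
  have hlow := hconv.add_inner_gradient_le hgrad x (y - (1 / L) • d)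
  have hup := le_add_inner_gradient_add_sq hgrad hlip y (y - (1 / L) • d)
  have hdd : ⟪g y, d⟫ - ⟪g x, d⟫ = ‖d‖ ^ 2 := by
    rw [← inner_sub_left, real_inner_self_eq_norm_sq]
  rw [sub_sub_cancel_left, inner_neg_right, norm_neg, real_inner_smul_right, norm_smul,
    Real.norm_of_nonneg (by positivity)] at hup
  rw [sub_right_comm, inner_sub_right, real_inner_smul_right] at hlow
  linear_combination hlow + hup - hdd / L + ‖d‖ ^ 2 / (2 * L) * mul_inv_cancel₀ hL.ne'

theorem IsLocalMin.hasGradientAt_eq_zero {f' x : E} (h : IsLocalMin f x)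
    (hf : HasGradientAt f f' x) : f' = 0 :=
  (toDual ℝ E).map_eq_zero_iff.1 (h.hasFDerivAt_eq_zero hf.hasFDerivAt)

theorem ConvexOn.sub_add_sq_gradient_le_inner (hconv : ConvexOn ℝ univ f)
    (hgrad : ∀ x, HasGradientAt f (g x) x) {L : ℝ} (hL : 0 < L)
    (hlip : ∀ a b, ‖g a - g b‖ ≤ L * ‖a - b‖) {xstar : E} (hmin : ∀ z, f xstar ≤ f z) (x : E) :
    f x - f xstar + 1 / (2 * L) * ‖g x‖ ^ 2 ≤ ⟪g x, x - xstar⟫ := by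
  have hg : g xstar = 0 :=
    IsLocalMin.hasGradientAt_eq_zero (Filter.Eventually.of_forall hmin) (hgrad xstar)
  have := hconv.add_inner_gradient_add_sq_le hgrad hL hlip x xstar
  rw [hg, zero_sub, norm_neg, ← neg_sub x xstar, inner_neg_right] at this
  linarith

end Gradient

section NagC

variable {E : Type*} [NormedAddCommGroup E] [InnerProductSpace ℝ E]
  {g : E → E} {X X' X'' : ℝ → E} {xstar : E} {β t : ℝ}

theorem hasDerivAt_nagc_momentum {H : E →L[ℝ] E} (hg : HasFDerivAt g H (X t))
    (hX : HasDerivAt X (X' t) t) (hX' : HasDerivAt X' (X'' t) t) (ht : t ≠ 0)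
    (hode : X'' t + (3 / t) • X' t + β • H (X' t) + (1 + 3 * β / (2 * t)) • g (X t) = 0) :
    HasDerivAt (fun u => u • X' u + (2 : ℝ) • (X u - xstar) + (u * β) • g (X u))
      (-((t + β / 2) • g (X t))) t := by
  have hV := (((hasDerivAt_id t).smul hX').add ((hX.sub_const xstar).const_smul (2 : ℝ))).add
    (((hasDerivAt_id t).mul_const β).smul (hg.comp_hasDerivAt t hX))
  refine hV.congr_deriv ?_
  rw [← sub_eq_zero]
  calc _ = t • (X'' t + (3 / t) • X' t + β • H (X' t) + (1 + 3 * β / (2 * t)) • g (X t)) := by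
        simp only [id, Function.comp_apply]
        match_scalars <;> field_simp <;> ring
    _ = 0 := by rw [hode, smul_zero]

variable [CompleteSpace E] {f : E → ℝ}

/-- The Lyapunov function `E(t)` of NAG-C, with `β` in place of `√s`. -/
noncomputable def nagcLyapunov (f : E → ℝ) (g : E → E) (X X' : ℝ → E) (xstar : E) (β u : ℝ) :
    ℝ :=
  u * (u + β / 2) * (f (X u) - f xstar)
    + (1 / 2) * ‖u • X' u + (2 : ℝ) • (X u - xstar) + (u * β) • g (X u)‖ ^ 2

theorem hasDerivAt_nagcLyapunov {H : E →L[ℝ] E} (hf : HasGradientAt f (g (X t)) (X t))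
    (hg : HasFDerivAt g H (X t)) (hX : HasDerivAt X (X' t) t) (hX' : HasDerivAt X' (X'' t) t)
    (ht : t ≠ 0)
    (hode : X'' t + (3 / t) • X' t + β • H (X' t) + (1 + 3 * β / (2 * t)) • g (X t) = 0) :
    HasDerivAt (nagcLyapunov f g X X' xstar β)
      ((2 * t + β / 2) * (f (X t) - f xstar)
        - (t + β / 2) * (2 * ⟪g (X t), X t - xstar⟫ + t * β * ‖g (X t)‖ ^ 2)) t := by
  have hV := hasDerivAt_nagc_momentum (xstar := xstar) hg hX hX' ht hode
  have hE := ((((hasDerivAt_id t).mul ((hasDerivAt_id t).add_const (β / 2))).mul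
    ((hf.comp_hasDerivAt hX).sub_const (f xstar))).add ((hV.inner ℝ hV).const_mul (1 / 2)))
  refine (hE.congr_of_eventuallyEq (Filter.Eventually.of_forall fun u => ?_)).congr_deriv ?_
  · simp [nagcLyapunov]
  · simp only [id, Pi.mul_apply, Function.comp_apply, inner_neg_right, inner_neg_left,
      inner_add_left, inner_add_right, real_inner_smul_left, real_inner_smul_right,
      real_inner_self_eq_norm_sq, real_inner_comm (X' t), real_inner_comm (X t - xstar)]
    ring

end NagC

/-- Continuous Lyapunov decrease for the high-resolution ODE of NAG-C. -/
theorem nag_c_ode_lyapunov_decrease {n : ℕ}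
    (f : EuclideanSpace ℝ (Fin n) → ℝ)
    (g : EuclideanSpace ℝ (Fin n) → EuclideanSpace ℝ (Fin n))
    (H : EuclideanSpace ℝ (Fin n) → EuclideanSpace ℝ (Fin n) →L[ℝ] EuclideanSpace ℝ (Fin n))
    (L s : ℝ) (hL : 0 < L) (hs : 0 < s)
    (hgrad : ∀ x, HasGradientAt f (g x) x)
    (hhess : ∀ x, HasFDerivAt g (H x) x)
    (hconv : ConvexOn ℝ Set.univ f)
    (hlip : ∀ a b, ‖g a - g b‖ ≤ L * ‖a - b‖)
    (xstar : EuclideanSpace ℝ (Fin n)) (hmin : ∀ z, f xstar ≤ f z)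
    (X X' X'' : ℝ → EuclideanSpace ℝ (Fin n))
    (hX' : ∀ t, HasDerivAt X (X' t) t)
    (hX'' : ∀ t, HasDerivAt X' (X'' t) t)
    (hode : ∀ t, (3/2) * Real.sqrt s ≤ t →
      X'' t + (3 / t) • X' t + Real.sqrt s • (H (X t)) (X' t)
        + (1 + 3 * Real.sqrt s / (2 * t)) • g (X t) = 0) :
    ∀ t, (3/2) * Real.sqrt s ≤ t →
      deriv (fun u => u * (u + Real.sqrt s / 2) * (f (X u) - f xstar)
          + (1/2) * ‖u • X' u + (2 : ℝ) • (X u - xstar) + (u * Real.sqrt s) • g (X u)‖ ^ 2) t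
        ≤ -(Real.sqrt s * t ^ 2 + (1 / L + s / 2) * t + Real.sqrt s / (2 * L))
            * ‖g (X t)‖ ^ 2 := by
  intro t ht
  have hβ : 0 < √s := Real.sqrt_pos.2 hs
  have ht0 : 0 < t := by linarith
  have hderiv := hasDerivAt_nagcLyapunov (f := f) (xstar := xstar) (hgrad (X t)) (hhess (X t))
    (hX' t) (hX'' t) ht0.ne' (hode t ht)
  change deriv (nagcLyapunov f g X X' xstar √s) t ≤ _
  rw [hderiv.deriv]
  have hcoc := hconv.sub_add_sq_gradient_le_inner hgrad hL hlip hmin (X t)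
  have hgap : 0 ≤ √s * (f (X t) - f xstar) := mul_nonneg hβ.le (sub_nonneg.2 (hmin (X t)))
  have hweighted := mul_le_mul_of_nonneg_left hcoc (by positivity : 0 ≤ 2 * t + √s)
  rw [show s / 2 = √s ^ 2 / 2 by rw [Real.sq_sqrt hs.le]]
  linear_combination hweighted + hgap / 2
end
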